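/- arXiv:1309.5758 — 7 statements merged into one kernel-verified Lean document; each statement's English description precedes it below -/
import Mathlib

section
/- Let (X,d) be a metric space, Ω ⊆ X a nonempty subset, and a, a' > 0. Define φ(x) = a + a'·dist(x,Ω)² and m(x) = min(1, 1/dist(x,Ω)) (with m(x) = 1 when dist(x,Ω) = 0). Then for every α > 0 and every ball B = B(c,r) with 0 < r ≤ α·m(c): (i) for all x ∈ B(c,2r), e^{-φ(x)} ≤ e^{4a'α(α+1)} · e^{-φ(c)}; and (ii) for all x ∈ B(c,r), e^{-φ(x)} ≥ e^{-a'α(α+2)} · e^{-φ(c)}. -/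
open Metric

theorem stmt0 {X : Type*} [MetricSpace X] (Ω : Set X) (hΩ : Ω.Nonempty)
    (a a' : ℝ) (ha : 0 < a) (ha' : 0 < a')
    (φ m : X → ℝ)
    (hφ : ∀ x, φ x = a + a' * (Metric.infDist x Ω) ^ 2)
    (hm : ∀ x, m x = if Metric.infDist x Ω = 0 then 1 else min 1 (Metric.infDist x Ω)⁻¹)
    (α : ℝ) (hα : 0 < α) (c : X) (r : ℝ) (hr : 0 < r) (hradm : r ≤ α * m c) :
    (∀ x ∈ ball c (2 * r),
      Real.exp (-(φ x)) ≤ Real.exp (4 * a' * α * (α + 1)) * Real.exp (-(φ c))) ∧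
    (∀ x ∈ ball c r,
      Real.exp (-(φ x)) ≥ Real.exp (-(a' * α * (α + 2))) * Real.exp (-(φ c))) := by
  set D := Metric.infDist c Ω with hDdef
  have hD0 : 0 ≤ D := Metric.infDist_nonneg
  have hrα : r ≤ α := by
    rcases eq_or_ne D 0 with h | h
    · rw [hm c, ← hDdef, if_pos h] at hradm; linarith
    · rw [hm c, ← hDdef, if_neg h] at hradm
      calc r ≤ α * min 1 D⁻¹ := hradm
        _ ≤ α * 1 := by gcongr; exact min_le_left _ _
        _ = α := mul_one α
  have hrD : r * D ≤ α := by
    rcases eq_or_ne D 0 with h | h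
    · rw [h, mul_zero]; linarith
    · have hDpos : 0 < D := lt_of_le_of_ne hD0 (Ne.symm h)
      rw [hm c, ← hDdef, if_neg h] at hradm
      have : r ≤ α * D⁻¹ := hradm.trans (by gcongr; exact min_le_right _ _)
      calc r * D ≤ α * D⁻¹ * D := by gcongr
        _ = α := by field_simp
  constructor
  · intro x hx
    rw [mem_ball] at hx
    set Dx := Metric.infDist x Ω with hDxdef
    have hDx0 : 0 ≤ Dx := Metric.infDist_nonneg
    have h1 : D ≤ Dx + dist x c := by
      have := Metric.infDist_le_infDist_add_dist (x := c) (y := x) (s := Ω)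
      rw [dist_comm]; linarith
    have h2 : D ≤ Dx + 2 * r := by linarith
    rw [← Real.exp_add, Real.exp_le_exp, hφ, hφ]
    have key : D ^ 2 - Dx ^ 2 ≤ 4 * α * (α + 1) := by
      nlinarith [mul_nonneg (by linarith : (0:ℝ) ≤ 2 * r - (D - Dx)) (by linarith : (0:ℝ) ≤ D + Dx), sq_nonneg r, sq_nonneg α, mul_nonneg hr.le hDx0]
    nlinarith [key]
  · intro x hx
    rw [mem_ball] at hx
    set Dx := Metric.infDist x Ω with hDxdef
    have hDx0 : 0 ≤ Dx := Metric.infDist_nonneg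
    have h1 : Dx ≤ D + dist x c := Metric.infDist_le_infDist_add_dist
    have h2 : Dx ≤ D + r := by linarith
    rw [ge_iff_le, ← Real.exp_add, Real.exp_le_exp, hφ, hφ]
    have key : Dx ^ 2 - D ^ 2 ≤ α * (α + 2) := by nlinarith [sq_nonneg α, sq_nonneg r]
    nlinarith [key]
end

section
/- Let (X,d) be a metric space and μ a Borel measure on X which is doubling with constant D_μ, i.e. μ(B(x,2r)) ≤ D_μ·μ(B(x,r)) for all x ∈ X and r > 0, with every ball of finite nonzero measure. Let Ω ⊆ X be nonempty, a, a' > 0, φ(x) = a + a'·dist(x,Ω)², m(x) = min(1, 1/dist(x,Ω)) (with m(x) = 1 when dist(x,Ω) = 0), and let γ be the measure with dγ = e^{-φ} dμ. Then for every α > 0 and every α-admissible ball B = B(c,r) (i.e. 0 < r ≤ α·m(c)) one has γ(B(c,2r)) ≤ D_μ·e^{a'α(5α+6)}·γ(B(c,r)). -/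
open Metric MeasureTheory

theorem stmt1 {X : Type*} [MetricSpace X] [MeasurableSpace X] [BorelSpace X]
    (μ : Measure X) (D : ℝ) (hD : 1 ≤ D)
    (hdoub : ∀ (x : X) (r : ℝ), 0 < r → μ (ball x (2 * r)) ≤ ENNReal.ofReal D * μ (ball x r))
    (hμ : ∀ (x : X) (r : ℝ), 0 < r → 0 < μ (ball x r) ∧ μ (ball x r) < ⊤)
    (Ω : Set X) (hΩ : Ω.Nonempty)
    (a a' : ℝ) (ha : 0 < a) (ha' : 0 < a')
    (φ m : X → ℝ)
    (hφ : ∀ x, φ x = a + a' * (Metric.infDist x Ω) ^ 2)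
    (hm : ∀ x, m x = if Metric.infDist x Ω = 0 then 1 else min 1 (Metric.infDist x Ω)⁻¹)
    (γ : Measure X)
    (hγ : γ = μ.withDensity fun x => ENNReal.ofReal (Real.exp (-(φ x))))
    (α : ℝ) (hα : 0 < α) (c : X) (r : ℝ) (hr : 0 < r) (hradm : r ≤ α * m c) :
    γ (ball c (2 * r)) ≤
      ENNReal.ofReal (D * Real.exp (a' * α * (5 * α + 6))) * γ (ball c r) := by
  set dC := Metric.infDist c Ω with hdC
  have hdC0 : 0 ≤ dC := Metric.infDist_nonneg
  have hmle : m c ≤ 1 := by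
    rw [hm]
    split
    · exact le_refl 1
    · exact min_le_left _ _
  have hrα : r ≤ α := le_trans hradm (by nlinarith)
  have hrd : r * dC ≤ α := by
    rcases eq_or_lt_of_le hdC0 with h0 | h0
    · rw [← h0, mul_zero]; exact hα.le
    · have h1 : m c ≤ dC⁻¹ := by
        rw [hm, if_neg (ne_of_gt h0)]
        exact min_le_right _ _
      have h2 : r ≤ α * dC⁻¹ := le_trans hradm (by nlinarith)
      calc r * dC ≤ (α * dC⁻¹) * dC := by nlinarith
        _ = α := by field_simp
  set M := max 0 (dC - 2 * r) with hM
  have hM0 : 0 ≤ M := le_max_left _ _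
  set L := a + a' * M ^ 2 with hL
  set U := a + a' * (dC + r) ^ 2 with hU
  have hkey : (dC + r) ^ 2 - M ^ 2 ≤ α * (5 * α + 6) := by
    rcases le_or_gt (2 * r) dC with h | h
    · have : M = dC - 2 * r := max_eq_right (by linarith)
      rw [this]
      nlinarith [hrd, hr.le, hα.le, sq_nonneg r, sq_nonneg α]
    · have hMsq : 0 ≤ M ^ 2 := sq_nonneg M
      nlinarith [hrd, hrα, hdC0, hr.le, hα.le, sq_nonneg α, sq_nonneg r]
  have hUL : U - L ≤ a' * α * (5 * α + 6) := by
    have := mul_le_mul_of_nonneg_left hkey ha'.le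
    simp only [hU, hL]; nlinarith [this]
  -- pointwise upper bound on big ball
  have hub : ∀ x ∈ ball c (2 * r),
      ENNReal.ofReal (Real.exp (-(φ x))) ≤ ENNReal.ofReal (Real.exp (-L)) := by
    intro x hx
    have hd1 : dC - 2 * r ≤ Metric.infDist x Ω := by
      have := Metric.infDist_le_infDist_add_dist (x := c) (y := x) (s := Ω)
      have hxc : dist c x < 2 * r := by rw [dist_comm]; exact mem_ball.mp hx
      linarith
    have hdx0 : 0 ≤ Metric.infDist x Ω := Metric.infDist_nonneg
    have hMx : M ≤ Metric.infDist x Ω := max_le hdx0 hd1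
    have hsq : M ^ 2 ≤ (Metric.infDist x Ω) ^ 2 := by
      exact pow_le_pow_left₀ hM0 hMx 2
    have : L ≤ φ x := by rw [hφ, hL]; nlinarith [hsq]
    exact ENNReal.ofReal_le_ofReal (Real.exp_le_exp.mpr (by linarith))
  -- pointwise lower bound on small ball
  have hlb : ∀ y ∈ ball c r,
      ENNReal.ofReal (Real.exp (-U)) ≤ ENNReal.ofReal (Real.exp (-(φ y))) := by
    intro y hy
    have hd1 : Metric.infDist y Ω ≤ dC + r := by
      have := Metric.infDist_le_infDist_add_dist (x := y) (y := c) (s := Ω)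
      have hyc : dist y c < r := mem_ball.mp hy
      linarith
    have hdy0 : 0 ≤ Metric.infDist y Ω := Metric.infDist_nonneg
    have hsq : (Metric.infDist y Ω) ^ 2 ≤ (dC + r) ^ 2 := pow_le_pow_left₀ hdy0 hd1 2
    have : φ y ≤ U := by rw [hφ, hU]; nlinarith [hsq]
    exact ENNReal.ofReal_le_ofReal (Real.exp_le_exp.mpr (by linarith))
  have h1 : γ (ball c (2 * r)) ≤ ENNReal.ofReal (Real.exp (-L)) * μ (ball c (2 * r)) := by
    rw [hγ, withDensity_apply _ measurableSet_ball]
    calc ∫⁻ x in ball c (2 * r), ENNReal.ofReal (Real.exp (-(φ x))) ∂μ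
        ≤ ∫⁻ _ in ball c (2 * r), ENNReal.ofReal (Real.exp (-L)) ∂μ :=
          setLIntegral_mono' measurableSet_ball hub
      _ = ENNReal.ofReal (Real.exp (-L)) * μ (ball c (2 * r)) := setLIntegral_const _ _
  have h2 : ENNReal.ofReal (Real.exp (-U)) * μ (ball c r) ≤ γ (ball c r) := by
    rw [hγ, withDensity_apply _ measurableSet_ball]
    calc ENNReal.ofReal (Real.exp (-U)) * μ (ball c r)
        = ∫⁻ _ in ball c r, ENNReal.ofReal (Real.exp (-U)) ∂μ := (setLIntegral_const _ _).symm
      _ ≤ ∫⁻ y in ball c r, ENNReal.ofReal (Real.exp (-(φ y))) ∂μ :=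
          setLIntegral_mono' measurableSet_ball hlb
  have hexp : Real.exp (-L) = Real.exp (U - L) * Real.exp (-U) := by
    rw [← Real.exp_add]; ring_nf
  calc γ (ball c (2 * r))
      ≤ ENNReal.ofReal (Real.exp (-L)) * μ (ball c (2 * r)) := h1
    _ ≤ ENNReal.ofReal (Real.exp (-L)) * (ENNReal.ofReal D * μ (ball c r)) :=
        mul_le_mul_right (hdoub c r hr) _
    _ = ENNReal.ofReal D * ENNReal.ofReal (Real.exp (U - L)) *
          (ENNReal.ofReal (Real.exp (-U)) * μ (ball c r)) := by
        rw [hexp, ENNReal.ofReal_mul (Real.exp_nonneg _)]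
        ring
    _ ≤ ENNReal.ofReal D * ENNReal.ofReal (Real.exp (U - L)) * γ (ball c r) :=
        mul_le_mul_right h2 _
    _ ≤ ENNReal.ofReal (D * Real.exp (a' * α * (5 * α + 6))) * γ (ball c r) := by
        apply mul_le_mul_left
        rw [ENNReal.ofReal_mul (by linarith : (0:ℝ) ≤ D)]
        exact mul_le_mul_right (ENNReal.ofReal_le_ofReal (Real.exp_le_exp.mpr hUL)) _
end

section
/- Let φ : ℝⁿ → ℝ be twice continuously differentiable and M > 0 be such that ‖Hess φ(x)‖ ≤ M·‖∇φ(x)‖ (operator norm of the second derivative) for every x with ‖∇φ(x)‖ > 1. Define m(x) = min(1, 1/‖∇φ(x)‖), with m(x) = 1 when ∇φ(x) = 0. Then for every α > 0 and all x, y ∈ ℝⁿ with ‖x − y‖ ≤ α, one has m(x) ≤ e^{Mα}·m(y). -/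
/-!
Set `N = max 1 ‖∇φ‖`, so that `m = 1 / N`. Along the segment from `x` to `y` the map
`t ↦ ∇φ(x + t (y - x))` has derivative of norm at most `M ‖y - x‖ ‖∇φ‖` wherever `‖∇φ‖ > 1`,
so a Grönwall argument that only runs while the norm is above `1` gives
`N(y) ≤ exp (M ‖y - x‖) N(x)`.
-/

open Metric Classical
noncomputable section

open Set Filter Topology

theorem norm_le_max_mul_exp_of_norm_deriv_le_of_lt_norm {E : Type*} [NormedAddCommGroup E]
    [NormedSpace ℝ E] {f f' : ℝ → E} {a b r K : ℝ} (hK : 0 ≤ K) (hf : ContinuousOn f (Icc a b))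
    (hf' : ∀ t ∈ Ico a b, HasDerivWithinAt f (f' t) (Ici t) t)
    (bound : ∀ t ∈ Ico a b, r < ‖f t‖ → ‖f' t‖ ≤ K * ‖f t‖) :
    ∀ ⦃t⦄, t ∈ Icc a b → ‖f t‖ ≤ max r ‖f a‖ * Real.exp (K * (t - a)) := by
  set c := max r ‖f a‖
  have hc : 0 ≤ c := (norm_nonneg _).trans (le_max_right _ _)
  -- Fence `f` by the strict supersolutions `(c + ε) exp ((K + ε)(t - a))`, then let `ε → 0`.
  have fence : ∀ ε > 0, ∀ ⦃t⦄, t ∈ Icc a b →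
      ‖f t‖ ≤ (c + ε) * Real.exp ((K + ε) * (t - a)) := by
    intro ε hε
    set B : ℝ → ℝ := fun t => (c + ε) * Real.exp ((K + ε) * (t - a))
    have hB : ∀ t, HasDerivAt B ((K + ε) * B t) t := fun t =>
      ((((hasDerivAt_id t).sub_const a).const_mul (K + ε)).exp.const_mul (c + ε)).congr_deriv
        (by simp only [B, id]; ring)
    refine image_norm_le_of_norm_deriv_right_lt_deriv_boundary' hf hf' ?_
      (fun t _ => (hB t).continuousAt.continuousWithinAt) (fun t _ => (hB t).hasDerivWithinAt) ?_
    · simp only [sub_self, mul_zero, Real.exp_zero, mul_one]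
      linarith [le_max_right r ‖f a‖]
    · intro t ht hfB
      have hBpos : 0 < B t := by positivity
      have hr : r < ‖f t‖ := by
        rw [hfB]
        calc r ≤ c := le_max_left _ _
          _ < c + ε := by linarith
          _ ≤ B t := le_mul_of_one_le_right (by linarith)
            (Real.one_le_exp (mul_nonneg (by linarith) (sub_nonneg.2 ht.1)))
      calc ‖f' t‖ ≤ K * ‖f t‖ := bound t ht hr
        _ < (K + ε) * B t := by rw [hfB]; exact mul_lt_mul_of_pos_right (by linarith) hBpos
  intro t ht
  have hlim : Tendsto (fun ε => (c + ε) * Real.exp ((K + ε) * (t - a))) (𝓝[>] 0)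
      (𝓝 ((c + 0) * Real.exp ((K + 0) * (t - a)))) :=
    (Continuous.tendsto (by fun_prop) _).mono_left nhdsWithin_le_nhds
  simp only [add_zero] at hlim
  exact ge_of_tendsto hlim (eventually_nhdsWithin_of_forall fun ε hε => fence ε hε ht)

theorem norm_fderiv_fderiv_eq_norm_iteratedFDeriv_two {E F : Type*} [NormedAddCommGroup E]
    [NormedSpace ℝ E] [NormedAddCommGroup F] [NormedSpace ℝ F] (φ : E → F) (z : E) :
    ‖fderiv ℝ (fderiv ℝ φ) z‖ = ‖iteratedFDeriv ℝ 2 φ z‖ := by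
  rw [← norm_iteratedFDeriv_one, norm_iteratedFDeriv_fderiv]

theorem max_norm_fderiv_le_exp_mul {E F : Type*} [NormedAddCommGroup E] [NormedSpace ℝ E]
    [NormedAddCommGroup F] [NormedSpace ℝ F] {φ : E → F} (hφ : ContDiff ℝ 2 φ) {r M : ℝ}
    (hM : 0 ≤ M)
    (hHess : ∀ z, r < ‖fderiv ℝ φ z‖ → ‖iteratedFDeriv ℝ 2 φ z‖ ≤ M * ‖fderiv ℝ φ z‖) (x y : E) :
    max r ‖fderiv ℝ φ y‖ ≤ Real.exp (M * ‖y - x‖) * max r ‖fderiv ℝ φ x‖ := by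
  have hDφ : Differentiable ℝ (fderiv ℝ φ) :=
    (hφ.fderiv_right (m := 1) (by norm_num)).differentiable one_ne_zero
  set γ : ℝ → E := fun t => x + t • (y - x)
  have hγ : ∀ t, HasDerivAt γ (y - x) t := fun t =>
    (((hasDerivAt_id t).smul_const (y - x)).const_add x).congr_deriv (one_smul ℝ _)
  have hf : ∀ t, HasDerivAt (fun t => fderiv ℝ φ (γ t)) (fderiv ℝ (fderiv ℝ φ) (γ t) (y - x)) t :=
    fun t => (hDφ (γ t)).hasFDerivAt.comp_hasDerivAt t (hγ t)
  have bound : ∀ t, r < ‖fderiv ℝ φ (γ t)‖ →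
      ‖fderiv ℝ (fderiv ℝ φ) (γ t) (y - x)‖ ≤ M * ‖y - x‖ * ‖fderiv ℝ φ (γ t)‖ := fun t hr =>
    calc ‖fderiv ℝ (fderiv ℝ φ) (γ t) (y - x)‖
        ≤ ‖fderiv ℝ (fderiv ℝ φ) (γ t)‖ * ‖y - x‖ := ContinuousLinearMap.le_opNorm _ _
      _ ≤ M * ‖fderiv ℝ φ (γ t)‖ * ‖y - x‖ := by
        rw [norm_fderiv_fderiv_eq_norm_iteratedFDeriv_two]
        exact mul_le_mul_of_nonneg_right (hHess _ hr) (norm_nonneg _)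
      _ = M * ‖y - x‖ * ‖fderiv ℝ φ (γ t)‖ := by ring
  have key := norm_le_max_mul_exp_of_norm_deriv_le_of_lt_norm (a := 0) (b := 1)
    (mul_nonneg hM (norm_nonneg _)) (fun t _ => (hf t).continuousAt.continuousWithinAt)
    (fun t _ => (hf t).hasDerivWithinAt) (fun t _ => bound t) (right_mem_Icc.2 zero_le_one)
  simp only [γ, zero_smul, one_smul, add_zero, add_sub_cancel, sub_zero, mul_one] at key
  rw [mul_comm]
  refine max_le ?_ key
  exact (le_max_left _ _).trans (le_mul_of_one_le_right ((norm_nonneg _).trans (le_max_right _ _))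
    (Real.one_le_exp (by positivity)))

theorem norm_gradient {E : Type*} [NormedAddCommGroup E] [InnerProductSpace ℝ E] [CompleteSpace E]
    (φ : E → ℝ) (z : E) : ‖gradient φ z‖ = ‖fderiv ℝ φ z‖ :=
  LinearIsometryEquiv.norm_map _ _

theorem ite_min_one_inv_norm_eq_inv_max_one_norm {E : Type*} [NormedAddCommGroup E] (v : E)
    [Decidable (v = 0)] :
    (if v = 0 then 1 else min 1 ‖v‖⁻¹) = (max 1 ‖v‖)⁻¹ := by
  split_ifs with hv
  · simp [hv]
  · rcases le_total 1 ‖v‖ with h | h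
    · rw [max_eq_right h, min_eq_right (inv_le_one_of_one_le₀ h)]
    · rw [max_eq_left h, inv_one, min_eq_left (one_le_inv₀ (norm_pos_iff.2 hv) |>.2 h)]

theorem stmt2_general {n : ℕ} (φ : EuclideanSpace ℝ (Fin n) → ℝ) (hφ : ContDiff ℝ 2 φ)
    (M : ℝ) (hM : 0 < M)
    (hHess : ∀ x, 1 < ‖gradient φ x‖ → ‖iteratedFDeriv ℝ 2 φ x‖ ≤ M * ‖gradient φ x‖)
    (m : EuclideanSpace ℝ (Fin n) → ℝ)
    (hm : ∀ x, m x = if gradient φ x = 0 then 1 else min 1 ‖gradient φ x‖⁻¹)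
    (α : ℝ) (x y : EuclideanSpace ℝ (Fin n)) (hxy : dist x y ≤ α) :
    m x ≤ Real.exp (M * α) * m y := by
  simp only [norm_gradient] at hHess
  have hyx : ‖y - x‖ ≤ α := by rwa [← dist_eq_norm, dist_comm]
  rw [hm, hm, ite_min_one_inv_norm_eq_inv_max_one_norm, ite_min_one_inv_norm_eq_inv_max_one_norm,
    norm_gradient, norm_gradient, ← div_eq_mul_inv, le_div_iff₀ (by positivity),
    inv_mul_le_iff₀ (by positivity), mul_comm]
  exact (max_norm_fderiv_le_exp_mul hφ hM.le hHess x y).trans (by gcongr)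

theorem stmt2 {n : ℕ} (φ : EuclideanSpace ℝ (Fin n) → ℝ) (hφ : ContDiff ℝ 2 φ)
    (M : ℝ) (hM : 0 < M)
    (hHess : ∀ x, 1 < ‖gradient φ x‖ → ‖iteratedFDeriv ℝ 2 φ x‖ ≤ M * ‖gradient φ x‖)
    (m : EuclideanSpace ℝ (Fin n) → ℝ)
    (hm : ∀ x, m x = if gradient φ x = 0 then 1 else min 1 ‖gradient φ x‖⁻¹)
    (α : ℝ) (hα : 0 < α) (x y : EuclideanSpace ℝ (Fin n)) (hxy : dist x y ≤ α) :
    m x ≤ Real.exp (M * α) * m y :=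
  stmt2_general φ hφ M hM hHess m hm α x y hxy
end
end

section
/- Let (X,d) be a metric space, γ a Borel measure on X with 0 < γ(B) < ∞ for every ball B, and m : X → (0,∞) an admissibility function. Let 1 < p,q < ∞ with conjugate exponents p', q' (1/p + 1/p' = 1, 1/q + 1/q' = 1). Then for all measurable f, g : D → ℂ one has ∬_D |f(y,t)|·|g(y,t)| dγ(y) dt/t ≤ ‖A_q^1 f‖_{L^p(γ)} · ‖A_{q'}^1 g‖_{L^{p'}(γ)}. -/
open MeasureTheory Metric ENNReal

noncomputable def tMeasure : Measure ℝ :=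
  (volume : Measure ℝ).withDensity fun t => ENNReal.ofReal (1 / t)

noncomputable def planeMeasure {X : Type*} [MeasurableSpace X] (γ : Measure X) :
    Measure (X × ℝ) := γ.prod tMeasure

def admRegion {X : Type*} (m : X → ℝ) : Set (X × ℝ) := {p | 0 < p.2 ∧ p.2 < m p.1}

def tCone {X : Type*} [PseudoMetricSpace X] (m : X → ℝ) (α : ℝ) (x : X) : Set (X × ℝ) :=
  {p | 0 < p.2 ∧ p.2 < m p.1 ∧ dist x p.1 < α * p.2}

def tentSet {X : Type*} [PseudoMetricSpace X] (m : X → ℝ) (O : Set X) : Set (X × ℝ) :=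
  {p | 0 < p.2 ∧ p.2 < m p.1 ∧ Metric.ball p.1 p.2 ⊆ O}

noncomputable def Afun {X : Type*} [PseudoMetricSpace X] [MeasurableSpace X]
    (γ : Measure X) (m : X → ℝ) (q α : ℝ) (f : X × ℝ → ℂ) (x : X) : ℝ≥0∞ :=
  (∫⁻ p in tCone m α x, (‖f p‖₊ : ℝ≥0∞) ^ q / γ (Metric.ball p.1 p.2) ∂(planeMeasure γ)) ^ (1 / q)

noncomputable def tNorm {X : Type*} [PseudoMetricSpace X] [MeasurableSpace X]
    (γ : Measure X) (m : X → ℝ) (p q α : ℝ) (f : X × ℝ → ℂ) : ℝ≥0∞ :=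
  (∫⁻ x, Afun γ m q α f x ^ p ∂γ) ^ (1 / p)

/-! For `(y, t)` in the admissible region, the points `x` whose cone contains `(y, t)` form the
ball `B(y, t)`, so by Tonelli the left side is `∫_X ∬_{Γ(x)} |f| |g| / γ(B(y, t))`. Hölder with
exponents `q, q'` for the measure `dγ dt / (t γ(B(y, t)))` on each cone bounds the inner integral
by `A_q f(x) · A_{q'} g(x)`, and Hölder with `p, p'` in `x` concludes. Tonelli needs measurability
of `(x, y, t) ↦ [d(x, y) < t]`, hence a separable `X`: this holds because disjoint balls of
positive mass for the σ-finite measure `γ` can only be countably many. -/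

open Set

theorem secondCountableTopology_of_measure_ball_pos {X : Type*} [PseudoMetricSpace X]
    [MeasurableSpace X] [OpensMeasurableSpace X] (μ : Measure X) [SFinite μ]
    (h : ∀ (x : X) (r : ℝ), 0 < r → 0 < μ (ball x r)) : SecondCountableTopology X := by
  refine secondCountable_of_almost_dense_set fun ε hε => ?_
  lift ε to NNReal using hε.le
  obtain ⟨N, hN⟩ := zorn_subset {N : Set X | IsSeparated (ε : ℝ≥0∞) N} fun c hc hchain =>
    ⟨⋃₀ c, hchain.pairwise_sUnion.2 hc, fun _ => subset_sUnion_of_mem⟩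
  refine ⟨N, ?_, fun x => ?_⟩
  · have hdisj : Pairwise (Function.onFun Disjoint fun y : N => ball (y : X) (ε / 2)) :=
      fun y z hyz => by
        have : (ε : ℝ≥0∞) < edist (y : X) z := hN.1 y.2 z.2 (Subtype.coe_injective.ne hyz)
        rw [edist_dist, ← ENNReal.ofReal_coe_nnreal, ENNReal.ofReal_lt_ofReal_iff'] at this
        exact ball_disjoint_ball (by linarith [this.1])
    have hpos : {y : N | 0 < μ (ball (y : X) (ε / 2))} = univ :=
      eq_univ_of_forall fun y => h y _ (half_pos hε)
    have := Measure.countable_meas_pos_of_disjoint_iUnion (μ := μ)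
      (fun _ => measurableSet_ball) hdisj
    rw [hpos, countable_univ_iff] at this
    exact countable_coe_iff.mp this
  · obtain ⟨y, hy, hxy⟩ := IsCover.of_maximal_isSeparated (s := univ)
      ⟨⟨subset_univ N, hN.1⟩, fun M hM hNM => hN.2 hM.2 hNM⟩ (mem_univ x)
    exact ⟨y, hy, by simpa [edist_dist] using hxy⟩

theorem sigmaFinite_of_measure_ball_lt_top {X : Type*} [PseudoMetricSpace X] [MeasurableSpace X]
    [OpensMeasurableSpace X] (μ : Measure X) (h : ∀ (x : X) (r : ℝ), 0 < r → μ (ball x r) < ⊤) :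
    SigmaFinite μ := by
  rcases isEmpty_or_nonempty X with hX | ⟨⟨x₀⟩⟩
  · rw [Measure.eq_zero_of_isEmpty μ]
    infer_instance
  exact ⟨⟨⟨fun n => ball x₀ (n + 1), fun _ => trivial, fun n => h x₀ _ (by positivity),
    iUnion_ball_nat_succ x₀⟩⟩⟩

theorem lintegral_mul_div_le_Lp_mul_Lq_div {α : Type*} [MeasurableSpace α] (μ : Measure α)
    {p q : ℝ} (hpq : p.HolderConjugate q) {f g w : α → ℝ≥0∞} (hf : AEMeasurable f μ)
    (hg : AEMeasurable g μ) (hw : AEMeasurable w μ) :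
    ∫⁻ a, f a * g a / w a ∂μ ≤
      (∫⁻ a, f a ^ p / w a ∂μ) ^ (1 / p) * (∫⁻ a, g a ^ q / w a ∂μ) ^ (1 / q) := by
  have hdens : ∀ h : α → ℝ≥0∞, AEMeasurable h μ →
      ∫⁻ a, h a / w a ∂μ = ∫⁻ a, h a ∂μ.withDensity w⁻¹ := fun h hh => by
    rw [lintegral_withDensity_eq_lintegral_mul₀ hw.inv hh]
    simp only [div_eq_mul_inv, Pi.mul_apply, Pi.inv_apply, mul_comm]
  rw [hdens (fun a => f a * g a) (hf.mul hg), hdens (fun a => f a ^ p) (hf.pow_const p),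
    hdens (fun a => g a ^ q) (hg.pow_const q)]
  have hac := withDensity_absolutelyContinuous μ w⁻¹
  exact ENNReal.lintegral_mul_le_Lp_mul_Lq _ hpq (hf.mono_ac hac) (hg.mono_ac hac)

instance : SFinite tMeasure :=
  inferInstanceAs (SFinite ((volume : Measure ℝ).withDensity fun t => ENNReal.ofReal (1 / t)))

instance {X : Type*} [MeasurableSpace X] (γ : Measure X) [SFinite γ] : SFinite (planeMeasure γ) :=
  inferInstanceAs (SFinite (γ.prod tMeasure))

def fullCone {X : Type*} [PseudoMetricSpace X] (α : ℝ) (x : X) : Set (X × ℝ) :=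
  {pt | dist x pt.1 < α * pt.2}

theorem tCone_eq_fullCone_inter {X : Type*} [PseudoMetricSpace X] (m : X → ℝ) (α : ℝ) (x : X) :
    tCone m α x = fullCone α x ∩ admRegion m := by
  ext pt
  simp only [tCone, fullCone, admRegion, mem_inter_iff, mem_ofPred_eq]
  tauto

section Cones

variable {X : Type*} [PseudoMetricSpace X] [MeasurableSpace X] [OpensMeasurableSpace X]
  [SecondCountableTopology X]

theorem measurableSet_setOf_dist_lt_mul (α : ℝ) :
    MeasurableSet {z : X × (X × ℝ) | dist z.1 z.2.1 < α * z.2.2} :=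
  measurableSet_lt (measurable_fst.dist (measurable_fst.comp measurable_snd))
    (measurable_const.mul (measurable_snd.comp measurable_snd))

theorem measurableSet_fullCone (α : ℝ) (x : X) : MeasurableSet (fullCone α x) :=
  measurable_prodMk_left (measurableSet_setOf_dist_lt_mul α)

theorem measurable_measure_ball (γ : Measure X) [SFinite γ] :
    Measurable fun pt : X × ℝ => γ (ball pt.1 pt.2) :=
  measurable_measure_prodMk_left <| measurableSet_lt
    (measurable_snd.dist (measurable_fst.comp measurable_fst)) (measurable_snd.comp measurable_fst)

theorem measurable_uncurry_indicator_fullCone (α : ℝ) {W : X × ℝ → ℝ≥0∞} (hW : Measurable W) :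
    Measurable (Function.uncurry fun x pt => (fullCone α x).indicator W pt) :=
  (hW.comp measurable_snd).indicator (measurableSet_setOf_dist_lt_mul α)

theorem measurable_lintegral_fullCone (ρ : Measure (X × ℝ)) [SFinite ρ] (α : ℝ)
    {W : X × ℝ → ℝ≥0∞} (hW : Measurable W) :
    Measurable fun x => ∫⁻ pt in fullCone α x, W pt ∂ρ := by
  simp_rw [← lintegral_indicator (measurableSet_fullCone α _)]
  exact (measurable_uncurry_indicator_fullCone α hW).lintegral_prod_right'

theorem lintegral_lintegral_fullCone (γ : Measure X) [SFinite γ] (ρ : Measure (X × ℝ)) [SFinite ρ]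
    (α : ℝ) {W : X × ℝ → ℝ≥0∞} (hW : Measurable W) :
    ∫⁻ x, ∫⁻ pt in fullCone α x, W pt ∂ρ ∂γ = ∫⁻ pt, γ (ball pt.1 (α * pt.2)) * W pt ∂ρ := by
  simp_rw [← lintegral_indicator (measurableSet_fullCone α _)]
  rw [lintegral_lintegral_swap (measurable_uncurry_indicator_fullCone α hW).aemeasurable]
  refine lintegral_congr fun pt => ?_
  have hball : ∀ x, (fullCone α x).indicator W pt =
      (ball pt.1 (α * pt.2)).indicator (fun _ => W pt) x := fun _ => rfl
  simp_rw [hball, lintegral_indicator_const measurableSet_ball, mul_comm]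

end Cones

section Tent

variable {X : Type*} [PseudoMetricSpace X] [MeasurableSpace X] [OpensMeasurableSpace X]
  [SecondCountableTopology X] (γ : Measure X) [SFinite γ] (m : X → ℝ)

theorem restrict_tCone (μ : Measure (X × ℝ)) (α : ℝ) (x : X) :
    μ.restrict (tCone m α x) = (μ.restrict (admRegion m)).restrict (fullCone α x) := by
  rw [Measure.restrict_restrict (measurableSet_fullCone α x), tCone_eq_fullCone_inter]

theorem measurable_Afun (q α : ℝ) {f : X × ℝ → ℂ} (hf : Measurable f) :
    Measurable (Afun γ m q α f) := by
  have hW : Measurable fun pt : X × ℝ => (‖f pt‖₊ : ℝ≥0∞) ^ q / γ (ball pt.1 pt.2) :=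
    (hf.nnnorm.coe_nnreal_ennreal.pow_const q).div (measurable_measure_ball γ)
  have hA : Afun γ m q α f = fun x => (∫⁻ pt in fullCone α x, (‖f pt‖₊ : ℝ≥0∞) ^ q /
      γ (ball pt.1 pt.2) ∂(planeMeasure γ).restrict (admRegion m)) ^ (1 / q) :=
    funext fun x => by rw [Afun, restrict_tCone]
  exact hA ▸ (measurable_lintegral_fullCone _ α hW).pow_const _

theorem lintegral_admRegion_eq_lintegral_tCone
    (hγ : ∀ (c : X) (r : ℝ), 0 < r → 0 < γ (ball c r) ∧ γ (ball c r) < ⊤)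
    {F : X × ℝ → ℝ≥0∞} (hF : Measurable F) :
    ∫⁻ pt in admRegion m, F pt ∂planeMeasure γ =
      ∫⁻ x, ∫⁻ pt in tCone m 1 x, F pt / γ (ball pt.1 pt.2) ∂planeMeasure γ ∂γ := by
  simp_rw [restrict_tCone]
  rw [lintegral_lintegral_fullCone γ _ 1 (W := fun pt => F pt / γ (ball pt.1 pt.2))
    (hF.div (measurable_measure_ball γ))]
  have hpos : ∀ᵐ pt ∂(planeMeasure γ).restrict (admRegion m), 0 < pt.2 :=
    ae_restrict_of_ae_restrict_of_subset (fun _ hpt => hpt.1)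
      (ae_restrict_mem (measurableSet_lt measurable_const measurable_snd))
  refine lintegral_congr_ae ?_
  filter_upwards [hpos] with pt hpt
  rw [one_mul, ENNReal.mul_div_cancel (hγ _ _ hpt).1.ne' (hγ _ _ hpt).2.ne]

theorem lintegral_tCone_le_Afun_mul_Afun {q q' : ℝ} (hq : q.HolderConjugate q') (α : ℝ)
    {f g : X × ℝ → ℂ} (hf : Measurable f) (hg : Measurable g) (x : X) :
    ∫⁻ pt in tCone m α x, (‖f pt‖₊ : ℝ≥0∞) * ‖g pt‖₊ / γ (ball pt.1 pt.2) ∂planeMeasure γ ≤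
      Afun γ m q α f x * Afun γ m q' α g x :=
  lintegral_mul_div_le_Lp_mul_Lq_div _ hq hf.nnnorm.coe_nnreal_ennreal.aemeasurable
    hg.nnnorm.coe_nnreal_ennreal.aemeasurable (measurable_measure_ball γ).aemeasurable

end Tent

theorem stmt6_general {X : Type*} [MetricSpace X] [MeasurableSpace X] [BorelSpace X]
    (γ : Measure X)
    (hγ : ∀ (c : X) (r : ℝ), 0 < r → 0 < γ (ball c r) ∧ γ (ball c r) < ⊤)
    (m : X → ℝ)
    (p q p' q' : ℝ) (hp : 1 < p) (hq : 1 < q)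
    (hp' : 1 / p + 1 / p' = 1) (hq' : 1 / q + 1 / q' = 1)
    (f g : X × ℝ → ℂ) (hf : Measurable f) (hg : Measurable g) :
    ∫⁻ pt in admRegion m, (‖f pt‖₊ : ℝ≥0∞) * (‖g pt‖₊ : ℝ≥0∞) ∂(planeMeasure γ) ≤
      tNorm γ m p q 1 f * tNorm γ m p' q' 1 g := by
  have hpp' : p.HolderConjugate p' :=
    Real.holderConjugate_iff.mpr ⟨hp, by simpa only [one_div] using hp'⟩
  have hqq' : q.HolderConjugate q' :=
    Real.holderConjugate_iff.mpr ⟨hq, by simpa only [one_div] using hq'⟩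
  have := sigmaFinite_of_measure_ball_lt_top γ fun c r hr => (hγ c r hr).2
  have := secondCountableTopology_of_measure_ball_pos γ fun c r hr => (hγ c r hr).1
  calc ∫⁻ pt in admRegion m, (‖f pt‖₊ : ℝ≥0∞) * ‖g pt‖₊ ∂planeMeasure γ
      = ∫⁻ x, ∫⁻ pt in tCone m 1 x, (‖f pt‖₊ : ℝ≥0∞) * ‖g pt‖₊ / γ (ball pt.1 pt.2)
          ∂planeMeasure γ ∂γ :=
        lintegral_admRegion_eq_lintegral_tCone γ m hγ
          (hf.nnnorm.coe_nnreal_ennreal.mul hg.nnnorm.coe_nnreal_ennreal)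
    _ ≤ ∫⁻ x, Afun γ m q 1 f x * Afun γ m q' 1 g x ∂γ :=
        lintegral_mono (lintegral_tCone_le_Afun_mul_Afun γ m hqq' 1 hf hg)
    _ ≤ tNorm γ m p q 1 f * tNorm γ m p' q' 1 g :=
        ENNReal.lintegral_mul_le_Lp_mul_Lq γ hpp' (measurable_Afun γ m q 1 hf).aemeasurable
          (measurable_Afun γ m q' 1 hg).aemeasurable

theorem stmt6 {X : Type*} [MetricSpace X] [MeasurableSpace X] [BorelSpace X]
    (γ : Measure X)
    (hγ : ∀ (c : X) (r : ℝ), 0 < r → 0 < γ (ball c r) ∧ γ (ball c r) < ⊤)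
    (m : X → ℝ) (hm : ∀ x, 0 < m x)
    (p q p' q' : ℝ) (hp : 1 < p) (hq : 1 < q)
    (hp' : 1 / p + 1 / p' = 1) (hq' : 1 / q + 1 / q' = 1)
    (f g : X × ℝ → ℂ) (hf : Measurable f) (hg : Measurable g) :
    ∫⁻ pt in admRegion m, (‖f pt‖₊ : ℝ≥0∞) * (‖g pt‖₊ : ℝ≥0∞) ∂(planeMeasure γ) ≤
      tNorm γ m p q 1 f * tNorm γ m p' q' 1 g :=
  stmt6_general γ hγ m p q p' q' hp hq hp' hq' f g hf hg
end

section
/- Let (X,d) be a metric space, γ a Borel measure on X with 0 < γ(B) < ∞ for every ball B, and m : X → (0,∞) an admissibility function. Let 1 ≤ q < ∞ and let a be a 5-atom: a measurable function on D vanishing outside T(B) for some ball B = B(c,r) with 0 < r ≤ 5·m(c), and satisfying ∬_{T(B)} |a(y,t)|^q dγ(y) dt/t ≤ γ(B)^{1−q}. Then ∫_X A_q^1 a(x) dγ(x) ≤ 1. -/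
open MeasureTheory Metric ENNReal

/-! The square function of an atom supported in the tent over `B` vanishes off `B`: a point whose
cone meets the tent lies in `B`. On `B`, Jensen's inequality for `s ↦ s ^ (1 / q)` gives
`∫_B A a ≤ (∫_B (A a) ^ q) ^ (1 / q) · γ(B) ^ (1 - 1 / q)`, and Tonelli in `(x, (y, t))` gives
`∫_B (A a) ^ q ≤ ∬ |a| ^ q γ(B(y,t)) / γ(B(y,t)) ≤ γ(B) ^ (1 - q)`. The exponents add up to `0`.

Tonelli needs `{(x, y, t) | d(x, y) < t}` to be product-measurable, hence `X` separable; this holds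
because disjoint balls of positive measure inside a ball of finite measure are countably many. -/

open Set

section BallMeasure

variable {X : Type*} [PseudoMetricSpace X] [MeasurableSpace X] (γ : Measure X)

lemma exists_lt_measure_ball_of_lt {y : X} {t : ℝ} {c : ℝ≥0∞} (hc : c < γ (ball y t)) :
    ∃ s < t, c < γ (ball y s) := by
  have hmono : Monotone fun n : ℕ => ball y (t - 1 / (n + 1)) := fun i j hij =>
    ball_subset_ball (by gcongr)
  have hunion : ⋃ n : ℕ, ball y (t - 1 / (n + 1)) = ball y t := by
    ext z
    simp only [mem_iUnion, mem_ball]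
    constructor
    · rintro ⟨n, hn⟩
      linarith [Nat.one_div_pos_of_nat (α := ℝ) (n := n)]
    · intro hz
      obtain ⟨n, hn⟩ := exists_nat_one_div_lt (sub_pos.2 hz)
      exact ⟨n, by linarith⟩
  have hlim := tendsto_measure_iUnion_atTop (μ := γ) hmono
  rw [hunion] at hlim
  obtain ⟨n, hn⟩ := ((tendsto_order.1 hlim).1 c hc).exists
  exact ⟨_, by linarith [Nat.one_div_pos_of_nat (α := ℝ) (n := n)], hn⟩

lemma lowerSemicontinuous_measure_ball :
    LowerSemicontinuous fun p : X × ℝ => γ (ball p.1 p.2) := by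
  rintro ⟨y, t⟩ c hc
  obtain ⟨s, hst, hcs⟩ := exists_lt_measure_ball_of_lt γ hc
  filter_upwards [ball_mem_nhds (y, t) (half_pos (sub_pos.2 hst))] with p hp
  rw [mem_ball, Prod.dist_eq, max_lt_iff, Real.dist_eq, abs_lt] at hp
  refine hcs.trans_le (measure_mono (ball_subset_ball' ?_))
  rw [dist_comm]
  linarith [hp.1, hp.2.1]

lemma measurable_measure_ball_s11 [OpensMeasurableSpace X] :
    Measurable fun p : X × ℝ => γ (ball p.1 p.2) :=
  (lowerSemicontinuous_measure_ball γ).measurable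

lemma countable_of_pairwise_le_dist [OpensMeasurableSpace X]
    (hγ : ∀ (c : X) (r : ℝ), 0 < r → 0 < γ (ball c r) ∧ γ (ball c r) < ⊤)
    {ε : ℝ} (hε : 0 < ε) {s : Set X} (hs : s.Pairwise fun x y => ε ≤ dist x y) : s.Countable := by
  rcases isEmpty_or_nonempty X with _ | ⟨⟨c⟩⟩
  · exact Set.subsingleton_of_subsingleton.countable
  rw [← inter_univ s, ← iUnion_ball_nat c, inter_iUnion]
  refine countable_iUnion fun n => ?_
  have hdisj : Pairwise (Function.onFun Disjoint fun x : ↥(s ∩ ball c n) => ball (x : X) (ε / 2)) :=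
    fun x y hxy => ball_disjoint_ball <| by
      linarith [hs x.2.1 y.2.1 (Subtype.coe_ne_coe.2 hxy)]
  have hfin : γ (⋃ x : ↥(s ∩ ball c n), ball (x : X) (ε / 2)) ≠ ⊤ := by
    refine ne_top_of_le_ne_top (hγ c (n + ε / 2) (by positivity)).2.ne
      (measure_mono (iUnion_subset fun x => ball_subset_ball' ?_))
    linarith [mem_ball.1 x.2.2]
  have hpos := Measure.countable_meas_pos_of_disjoint_of_meas_iUnion_ne_top γ
    (fun _ => measurableSet_ball) hdisj hfin
  simp only [fun x : ↥(s ∩ ball c n) => (hγ x (ε / 2) (half_pos hε)).1, ofPred_true,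
    countable_univ_iff] at hpos
  exact countable_coe_iff.1 hpos

theorem secondCountableTopology_of_measure_ball [OpensMeasurableSpace X]
    (hγ : ∀ (c : X) (r : ℝ), 0 < r → 0 < γ (ball c r) ∧ γ (ball c r) < ⊤) :
    SecondCountableTopology X := by
  refine secondCountable_of_almost_dense_set fun ε hε => ?_
  obtain ⟨S, -, hS⟩ := zorn_subset_nonempty {s : Set X | s.Pairwise fun x y => ε ≤ dist x y}
    (fun C hC hchain _ => ⟨⋃₀ C, hchain.pairwise_sUnion.2 hC, fun _ => subset_sUnion_of_mem⟩)
    ∅ (pairwise_empty _)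
  refine ⟨S, countable_of_pairwise_le_dist γ hγ hε hS.prop, fun x => ?_⟩
  by_contra! hfar
  have hxS : x ∈ S := hS.mem_of_prop_insert <| pairwise_insert.2
    ⟨hS.prop, fun y hy _ => ⟨(hfar y hy).le, (dist_comm x y ▸ hfar y hy).le⟩⟩
  linarith [hfar x hxS, dist_self x]

end BallMeasure

lemma MeasureTheory.Measure.restrict_prod_eq_prod_univ' {α β : Type*} [MeasurableSpace α]
    [MeasurableSpace β] (μ : Measure α) (ν : Measure β) [SFinite ν] {s : Set α}
    (hs : MeasurableSet s) : (μ.prod ν).restrict (s ×ˢ univ) = (μ.restrict s).prod ν := by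
  ext u hu
  rw [Measure.restrict_apply hu, Measure.prod_apply hu,
    Measure.prod_apply (hu.inter (hs.prod .univ)), ← lintegral_indicator hs]
  congr 1 with x
  by_cases hx : x ∈ s <;> simp [hx, Set.indicator, preimage]

lemma lintegral_rpow_one_div_le {α : Type*} [MeasurableSpace α] {μ : Measure α}
    {f : α → ℝ≥0∞} (hf : AEMeasurable f μ) {q : ℝ} (hq : 1 ≤ q) :
    ∫⁻ x, f x ^ (1 / q) ∂μ ≤ (∫⁻ x, f x ∂μ) ^ (1 / q) * μ univ ^ (1 - 1 / q) := by
  have hq0 : 0 < q := one_pos.trans_le hq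
  have h := eLpNorm'_le_eLpNorm'_mul_rpow_measure_univ one_pos hq
    (hf.pow_const (1 / q)).aestronglyMeasurable
  simp only [eLpNorm'_eq_lintegral_enorm, enorm_eq_self, ENNReal.rpow_one, div_one] at h
  simpa only [← ENNReal.rpow_mul, one_div_mul_cancel hq0.ne', ENNReal.rpow_one] using h

section Cones

variable {X : Type*} [PseudoMetricSpace X] [MeasurableSpace X] [OpensMeasurableSpace X]

lemma measurableSet_dist_lt (x : X) : MeasurableSet {p : X × ℝ | dist x p.1 < p.2} :=
  (isOpen_lt (continuous_const.dist continuous_fst) continuous_snd).measurableSet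

variable [SecondCountableTopology X] {f : X × ℝ → ℝ≥0∞}

lemma measurable_uncurry_indicator_dist_lt (hf : Measurable f) :
    Measurable (Function.uncurry fun x p => {p : X × ℝ | dist x p.1 < p.2}.indicator f p) :=
  (hf.comp measurable_snd).indicator
    (isOpen_lt (continuous_fst.dist continuous_snd.fst) continuous_snd.snd).measurableSet

lemma measurable_setLIntegral_dist_lt (ρ : Measure (X × ℝ)) [SFinite ρ] (hf : Measurable f) :
    Measurable fun x => ∫⁻ p in {p | dist x p.1 < p.2}, f p ∂ρ := by
  simp_rw [← lintegral_indicator (measurableSet_dist_lt _)]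
  exact (measurable_uncurry_indicator_dist_lt hf).lintegral_prod_right'

theorem lintegral_setLIntegral_dist_lt (μ : Measure X) [SFinite μ] (ρ : Measure (X × ℝ))
    [SFinite ρ] (hf : Measurable f) :
    ∫⁻ x, ∫⁻ p in {p | dist x p.1 < p.2}, f p ∂ρ ∂μ = ∫⁻ p, μ (ball p.1 p.2) * f p ∂ρ := by
  simp_rw [← lintegral_indicator (measurableSet_dist_lt _)]
  rw [lintegral_lintegral_swap (measurable_uncurry_indicator_dist_lt hf).aemeasurable]
  refine lintegral_congr fun p => ?_
  rw [mul_comm, ← lintegral_indicator_const measurableSet_ball]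
  rfl

end Cones

instance inst_s11 : SFinite tMeasure := by
  unfold tMeasure
  infer_instance

section Tents

variable {X : Type*} [PseudoMetricSpace X] {m : X → ℝ} {O : Set X}

lemma mem_of_mem_tentSet_of_dist_lt {p : X × ℝ} (hp : p ∈ tentSet m O) {x : X}
    (hx : dist x p.1 < p.2) : x ∈ O :=
  hp.2.2 (mem_ball.2 hx)

lemma tentSet_subset_prod_univ : tentSet m O ⊆ O ×ˢ univ := fun p hp =>
  ⟨mem_of_mem_tentSet_of_dist_lt hp (by simpa using hp.1), trivial⟩

lemma tCone_one_subset_setOf_dist_lt (m : X → ℝ) (x : X) :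
    tCone m 1 x ⊆ {p | dist x p.1 < p.2} := fun p hp => by simpa using hp.2.2

end Tents

section ConeIntegral

variable {X : Type*} [PseudoMetricSpace X] [MeasurableSpace X]

/-- `A_q^1 f (x) ^ q` for `w = |f| ^ q`, except that the cone is not truncated at `t < m y`. -/
noncomputable def coneIntegral (γ : Measure X) (w : X × ℝ → ℝ≥0∞) (x : X) : ℝ≥0∞ :=
  ∫⁻ p in {p | dist x p.1 < p.2}, w p / γ (ball p.1 p.2) ∂(planeMeasure γ)

lemma Afun_one_le_coneIntegral (γ : Measure X) (m : X → ℝ) {q : ℝ} (hq : 0 ≤ q)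
    (f : X × ℝ → ℂ) (x : X) :
    Afun γ m q 1 f x ≤ coneIntegral γ (fun p => (‖f p‖₊ : ℝ≥0∞) ^ q) x ^ (1 / q) :=
  ENNReal.rpow_le_rpow (lintegral_mono_set (tCone_one_subset_setOf_dist_lt m x)) (by positivity)

variable [OpensMeasurableSpace X] {γ : Measure X} {w : X × ℝ → ℝ≥0∞} {m : X → ℝ} {O : Set X}

lemma coneIntegral_eq_zero_of_notMem (hw : Function.support w ⊆ tentSet m O) {x : X}
    (hx : x ∉ O) : coneIntegral γ w x = 0 := by
  refine (setLIntegral_congr_fun (measurableSet_dist_lt x) fun p hp => ?_).trans lintegral_zero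
  by_contra hp0
  exact hx (mem_of_mem_tentSet_of_dist_lt (hw (left_ne_zero_of_mul hp0)) hp)

lemma coneIntegral_eq_setLIntegral_restrict (hw : Function.support w ⊆ tentSet m O) (x : X) :
    coneIntegral γ w x = ∫⁻ p in {p | dist x p.1 < p.2}, w p / γ (ball p.1 p.2)
      ∂(planeMeasure γ).restrict (O ×ˢ univ) := by
  rw [Measure.restrict_comm (measurableSet_dist_lt x)]
  exact (setLIntegral_eq_of_support_subset fun p hp =>
    tentSet_subset_prod_univ (hw (left_ne_zero_of_mul hp))).symm

theorem setLIntegral_coneIntegral_rpow_le [SecondCountableTopology X] (hO : MeasurableSet O)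
    (hγO : γ O ≠ ⊤) (hw_meas : Measurable w) (hw : Function.support w ⊆ tentSet m O) {q : ℝ}
    (hq : 1 ≤ q) :
    ∫⁻ x in O, coneIntegral γ w x ^ (1 / q) ∂γ ≤
      (∫⁻ p, w p ∂planeMeasure γ) ^ (1 / q) * γ O ^ (1 - 1 / q) := by
  have : IsFiniteMeasure (γ.restrict O) := isFiniteMeasure_restrict.2 hγO
  set ρ := (planeMeasure γ).restrict (O ×ˢ univ)
  -- `γ` itself need not be s-finite, but its restriction to `O` is finite.
  have : SFinite ρ := by
    rw [show ρ = _ from Measure.restrict_prod_eq_prod_univ' γ tMeasure hO]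
    infer_instance
  have hg : Measurable fun p : X × ℝ => w p / γ (ball p.1 p.2) :=
    hw_meas.div (measurable_measure_ball_s11 γ)
  simp_rw [coneIntegral_eq_setLIntegral_restrict hw]
  refine (lintegral_rpow_one_div_le (measurable_setLIntegral_dist_lt ρ hg).aemeasurable hq).trans ?_
  rw [Measure.restrict_apply_univ]
  gcongr
  calc ∫⁻ x in O, ∫⁻ p in {p | dist x p.1 < p.2}, w p / γ (ball p.1 p.2) ∂ρ ∂γ
      = ∫⁻ p, γ.restrict O (ball p.1 p.2) * (w p / γ (ball p.1 p.2)) ∂ρ :=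
        lintegral_setLIntegral_dist_lt _ _ hg
    _ ≤ ∫⁻ p, w p ∂ρ := lintegral_mono fun p =>
        (mul_le_mul_left (Measure.restrict_le_self _) _).trans ENNReal.mul_div_le
    _ ≤ ∫⁻ p, w p ∂planeMeasure γ := setLIntegral_le_lintegral _ _

end ConeIntegral

theorem stmt11_general {X : Type*} [MetricSpace X] [MeasurableSpace X] [BorelSpace X]
    (γ : Measure X)
    (hγ : ∀ (c : X) (r : ℝ), 0 < r → 0 < γ (ball c r) ∧ γ (ball c r) < ⊤)
    (m : X → ℝ)
    (q : ℝ) (hq : 1 ≤ q)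
    (a : X × ℝ → ℂ) (ha : Measurable a)
    (c : X) (r : ℝ) (hr : 0 < r)
    (hsupp : ∀ p, p ∉ tentSet m (ball c r) → a p = 0)
    (hsize : ∫⁻ p in tentSet m (ball c r), (‖a p‖₊ : ℝ≥0∞) ^ q ∂(planeMeasure γ) ≤
      γ (ball c r) ^ (1 - q)) :
    ∫⁻ x, Afun γ m q 1 a x ∂γ ≤ 1 := by
  have := secondCountableTopology_of_measure_ball γ hγ
  obtain ⟨hB0, hBtop⟩ := hγ c r hr
  have hq0 : 0 < q := one_pos.trans_le hq
  set w : X × ℝ → ℝ≥0∞ := fun p => (‖a p‖₊ : ℝ≥0∞) ^ q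
  have hw_supp : Function.support w ⊆ tentSet m (ball c r) := fun p hp => by
    by_contra hp'
    simp [w, hsupp p hp', hq0] at hp
  calc ∫⁻ x, Afun γ m q 1 a x ∂γ ≤ ∫⁻ x in ball c r, coneIntegral γ w x ^ (1 / q) ∂γ := by
        rw [← lintegral_indicator measurableSet_ball]
        refine lintegral_mono fun x => (Afun_one_le_coneIntegral γ m hq0.le a x).trans_eq ?_
        by_cases hx : x ∈ ball c r
        · rw [indicator_of_mem hx]
        · rw [indicator_of_notMem hx, coneIntegral_eq_zero_of_notMem hw_supp hx,
            ENNReal.zero_rpow_of_pos (by positivity)]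
    _ ≤ (∫⁻ p, w p ∂planeMeasure γ) ^ (1 / q) * γ (ball c r) ^ (1 - 1 / q) :=
        setLIntegral_coneIntegral_rpow_le measurableSet_ball hBtop.ne
          (ha.nnnorm.coe_nnreal_ennreal.pow_const q) hw_supp hq
    _ ≤ (γ (ball c r) ^ (1 - q)) ^ (1 / q) * γ (ball c r) ^ (1 - 1 / q) := by
        rw [← setLIntegral_eq_of_support_subset hw_supp]
        gcongr
    _ = 1 := by
        rw [← ENNReal.rpow_mul, ← ENNReal.rpow_add _ _ hB0.ne' hBtop.ne]
        field_simp
        simp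

theorem stmt11 {X : Type*} [MetricSpace X] [MeasurableSpace X] [BorelSpace X]
    (γ : Measure X)
    (hγ : ∀ (c : X) (r : ℝ), 0 < r → 0 < γ (ball c r) ∧ γ (ball c r) < ⊤)
    (m : X → ℝ) (hm : ∀ x, 0 < m x)
    (q : ℝ) (hq : 1 ≤ q)
    (a : X × ℝ → ℂ) (ha : Measurable a)
    (c : X) (r : ℝ) (hr : 0 < r) (hradm : r ≤ 5 * m c)
    (hsupp : ∀ p, p ∉ tentSet m (ball c r) → a p = 0)
    (hsize : ∫⁻ p in tentSet m (ball c r), (‖a p‖₊ : ℝ≥0∞) ^ q ∂(planeMeasure γ) ≤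
      γ (ball c r) ^ (1 - q)) :
    ∫⁻ x, Afun γ m q 1 a x ∂γ ≤ 1 :=
  stmt11_general γ hγ m q hq a ha c r hr hsupp hsize
end

section
/- Let (X,d) be a geometrically doubling metric space, γ a Borel measure on X with 0 < γ(B) < ∞ for every ball B, and m : X → (0,∞) an admissibility function satisfying condition (A). Fix α > 0 and define the α-local maximal operator M_α u(x) = sup{ γ(B)^{-1} ∫_B |u| dγ : B an α-admissible ball with x ∈ B } (with M_α u(x) = 0 if no α-admissible ball contains x). Then there exists a constant C ≥ 1, depending only on α, the geometric doubling constant, and the constants in condition (A), such that for every u ∈ L¹(γ) and every λ > 0, γ({x ∈ X : M_α u(x) > λ}) ≤ (C/λ)·‖u‖_{L¹(γ)}. -/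
/-!
Fix `λ > 0` and `R > 0`. By the Vitali covering lemma, the admissible balls of radius at most `R`
on which the average of `|u|` exceeds `λ` contain a disjoint subfamily whose fourfold enlargements
cover their union. Condition (A) at `2α`, applied twice, gives `γ(4B) ≤ C² γ(B)` for every
`α`-admissible ball `B`, while `λ γ(B) < ∫_B |u| dγ` on each chosen ball. Disjointness makes the
subfamily countable (the measure `|u| dγ` is finite) and the sum of the `∫_B |u| dγ` at most
`‖u‖₁`, so the union has measure at most `C²/λ ‖u‖₁`; letting `R → ∞` gives the estimate.
-/

open MeasureTheory Metric ENNReal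

/-- The `α`-local maximal operator: supremum of averages of `|u|` over
`α`-admissible balls containing `x` (zero if there is no such ball). -/
noncomputable def locMax {X : Type*} [PseudoMetricSpace X] [MeasurableSpace X]
    (γ : Measure X) (m : X → ℝ) (α : ℝ) (u : X → ℝ) (x : X) : ℝ≥0∞ :=
  ⨆ (c : X) (r : ℝ) (_ : 0 < r) (_ : r ≤ α * m c) (_ : x ∈ ball c r),
    (γ (ball c r))⁻¹ * ∫⁻ z in ball c r, (‖u z‖₊ : ℝ≥0∞) ∂γ

theorem Set.PairwiseDisjoint.countable_of_measure_pos {α ι : Type*} [MeasurableSpace α]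
    {μ : Measure α} [SFinite μ] {s : Set ι} {f : ι → Set α} (hd : s.PairwiseDisjoint f)
    (hf : ∀ i ∈ s, MeasurableSet (f i)) (hpos : ∀ i ∈ s, 0 < μ (f i)) : s.Countable := by
  have h := Measure.countable_meas_pos_of_disjoint_iUnion (μ := μ) (As := fun i : s ↦ f i)
    (fun i ↦ hf i i.2) fun i j hij ↦ hd i.2 j.2 (Subtype.coe_ne_coe.2 hij)
  simpa [Set.ofPred_true, hpos _ (Subtype.prop _)] using h.image Subtype.val

section Covering

variable {X : Type*} [PseudoMetricSpace X]

/-- Vitali covering with open balls: the enlargement factor `4 = 2 · 3/2 + 1` comes from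
choosing `τ = 3/2` in `Vitali.exists_disjoint_subfamily_covering_enlargement`. -/
theorem exists_pairwiseDisjoint_ball_subset_ball_four_mul {t : Set (X × ℝ)} {R : ℝ}
    (hpos : ∀ p ∈ t, 0 < p.2) (hR : ∀ p ∈ t, p.2 ≤ R) :
    ∃ v ⊆ t, v.PairwiseDisjoint (fun p ↦ ball p.1 p.2) ∧
      ∀ p ∈ t, ∃ q ∈ v, ball p.1 p.2 ⊆ ball q.1 (4 * q.2) := by
  obtain ⟨v, hvt, hvd, hcov⟩ := Vitali.exists_disjoint_subfamily_covering_enlargement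
    (fun p : X × ℝ ↦ ball p.1 p.2) t (·.2) (3 / 2) (by norm_num) (fun p hp ↦ (hpos p hp).le)
    R hR fun p hp ↦ ⟨p.1, mem_ball_self (hpos p hp)⟩
  refine ⟨v, hvt, hvd, fun p hp ↦ ?_⟩
  obtain ⟨q, hqv, ⟨y, hyp, hyq⟩, hpq⟩ := hcov p hp
  refine ⟨q, hqv, fun x hx ↦ ?_⟩
  rw [mem_ball] at hx hyp hyq ⊢
  calc dist x q.1 ≤ dist x p.1 + dist p.1 y + dist y q.1 := dist_triangle4 _ _ _ _
    _ < p.2 + p.2 + q.2 := by gcongr; rwa [dist_comm]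
    _ ≤ 4 * q.2 := by linarith

variable [MeasurableSpace X] [OpensMeasurableSpace X]

theorem measure_biUnion_ball_le (γ ν : Measure X) [IsFiniteMeasure ν] {t : Set (X × ℝ)} {R : ℝ}
    {K a : ℝ≥0∞} (hpos : ∀ p ∈ t, 0 < p.2) (hR : ∀ p ∈ t, p.2 ≤ R)
    (hdbl : ∀ p ∈ t, γ (ball p.1 (4 * p.2)) ≤ K * γ (ball p.1 p.2))
    (hν : ∀ p ∈ t, a * γ (ball p.1 p.2) < ν (ball p.1 p.2)) :
    γ (⋃ p ∈ t, ball p.1 p.2) ≤ K / a * ν Set.univ := by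
  obtain ⟨v, hvt, hvd, hcov⟩ := exists_pairwiseDisjoint_ball_subset_ball_four_mul hpos hR
  have hv : v.Countable := hvd.countable_of_measure_pos (μ := ν) (fun _ _ ↦ measurableSet_ball)
    fun p hp ↦ pos_of_gt (hν p (hvt hp))
  have hγν : ∀ p ∈ v, γ (ball p.1 (4 * p.2)) ≤ K * a⁻¹ * ν (ball p.1 p.2) := by
    intro p hp
    rw [mul_assoc, ← ENNReal.div_eq_inv_mul]
    refine (hdbl p (hvt hp)).trans (mul_le_mul_right ?_ K)
    rw [ENNReal.le_div_iff_mul_le (Or.inr (pos_of_gt (hν p (hvt hp))).ne')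
      (Or.inr (measure_ne_top ν _)), mul_comm]
    exact (hν p (hvt hp)).le
  calc γ (⋃ p ∈ t, ball p.1 p.2) ≤ γ (⋃ p ∈ v, ball p.1 (4 * p.2)) := by
        refine measure_mono (Set.iUnion₂_subset fun p hp ↦ ?_)
        obtain ⟨q, hqv, hpq⟩ := hcov p hp
        exact hpq.trans (Set.subset_iUnion₂_of_subset q hqv subset_rfl)
    _ ≤ ∑' p : v, γ (ball p.1.1 (4 * p.1.2)) := measure_biUnion_le γ hv _
    _ ≤ ∑' p : v, K * a⁻¹ * ν (ball p.1.1 p.1.2) := ENNReal.tsum_le_tsum fun p ↦ hγν p p.2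
    _ = K * a⁻¹ * ν (⋃ p ∈ v, ball p.1 p.2) := by
        rw [ENNReal.tsum_mul_left, measure_biUnion hv hvd fun _ _ ↦ measurableSet_ball]
    _ ≤ K / a * ν Set.univ := mul_le_mul_right (measure_mono (Set.subset_univ _)) _

end Covering

section Admissible

variable {X : Type*} [PseudoMetricSpace X] [MeasurableSpace X]

def admissibleBallsAbove (γ : Measure X) (m : X → ℝ) (α : ℝ) (u : X → ℝ) (a : ℝ≥0∞) (R : ℝ) :
    Set (X × ℝ) :=
  {p | 0 < p.2 ∧ p.2 ≤ α * m p.1 ∧ p.2 ≤ R ∧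
    a < (γ (ball p.1 p.2))⁻¹ * ∫⁻ z in ball p.1 p.2, (‖u z‖₊ : ℝ≥0∞) ∂γ}

theorem admissibleBallsAbove_mono (γ : Measure X) (m : X → ℝ) (α : ℝ) (u : X → ℝ) (a : ℝ≥0∞) :
    Monotone (admissibleBallsAbove γ m α u a) :=
  fun _ _ hRS _ ⟨hpos, hadm, hR, havg⟩ ↦ ⟨hpos, hadm, hR.trans hRS, havg⟩

theorem setOf_lt_locMax_subset (γ : Measure X) (m : X → ℝ) (α : ℝ) (u : X → ℝ) (a : ℝ≥0∞) :
    {x | a < locMax γ m α u x} ⊆ ⋃ n : ℕ, ⋃ p ∈ admissibleBallsAbove γ m α u a n, ball p.1 p.2 := by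
  intro x hx
  simp only [Set.mem_ofPred_eq, locMax, lt_iSup_iff] at hx
  obtain ⟨c, r, hr, hadm, hxr, havg⟩ := hx
  exact Set.mem_iUnion.2 ⟨⌈r⌉₊, Set.mem_biUnion (x := (c, r)) ⟨hr, hadm, Nat.le_ceil r, havg⟩ hxr⟩

theorem measure_ball_four_mul_le {γ : Measure X} {c : X} {ρ : ℝ} {K : ℝ≥0∞}
    (hK : ∀ r, 0 < r → r ≤ ρ → γ (ball c (2 * r)) ≤ K * γ (ball c r)) {r : ℝ} (hr : 0 < r)
    (hrρ : 2 * r ≤ ρ) : γ (ball c (4 * r)) ≤ K ^ 2 * γ (ball c r) :=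
  calc γ (ball c (4 * r)) = γ (ball c (2 * (2 * r))) := by ring_nf
    _ ≤ K * γ (ball c (2 * r)) := hK _ (by positivity) hrρ
    _ ≤ K * (K * γ (ball c r)) := by gcongr; exact hK r hr (by linarith)
    _ = K ^ 2 * γ (ball c r) := by rw [← mul_assoc, sq]

end Admissible

theorem stmt18_general {X : Type*} [MetricSpace X] [MeasurableSpace X] [BorelSpace X]
    (γ : Measure X)
    (m : X → ℝ)
    (hA : ∀ a : ℝ, 0 < a → ∃ C : ℝ, 1 ≤ C ∧ ∀ (c : X) (r : ℝ), 0 < r → r ≤ a * m c →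
      γ (ball c (2 * r)) ≤ ENNReal.ofReal C * γ (ball c r))
    (α : ℝ) (hα : 0 < α) :
    ∃ C : ℝ, 1 ≤ C ∧ ∀ u : X → ℝ, Integrable u γ → ∀ lam : ℝ, 0 < lam →
      γ {x : X | ENNReal.ofReal lam < locMax γ m α u x} ≤
        (ENNReal.ofReal C / ENNReal.ofReal lam) * ∫⁻ z, (‖u z‖₊ : ℝ≥0∞) ∂γ := by
  obtain ⟨C, hC1, hC⟩ := hA (2 * α) (by positivity)
  refine ⟨C ^ 2, one_le_pow₀ hC1, fun u hu lam _ ↦ ?_⟩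
  set ν := γ.withDensity fun z ↦ (‖u z‖₊ : ℝ≥0∞)
  have : IsFiniteMeasure ν := isFiniteMeasure_withDensity hu.2.ne
  have hν : ∀ s, MeasurableSet s → ν s = ∫⁻ z in s, (‖u z‖₊ : ℝ≥0∞) ∂γ :=
    fun _ ↦ withDensity_apply _
  have hν_univ : ν Set.univ = ∫⁻ z, (‖u z‖₊ : ℝ≥0∞) ∂γ := by
    rw [hν _ MeasurableSet.univ, Measure.restrict_univ]
  set T := admissibleBallsAbove γ m α u (ENNReal.ofReal lam)
  have h_bounded : ∀ n : ℕ, γ (⋃ p ∈ T n, ball p.1 p.2) ≤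
      ENNReal.ofReal (C ^ 2) / ENNReal.ofReal lam * ∫⁻ z, (‖u z‖₊ : ℝ≥0∞) ∂γ := by
    intro n
    rw [ENNReal.ofReal_pow (by linarith), ← hν_univ]
    exact measure_biUnion_ball_le γ ν (t := T n) (fun p hp ↦ hp.1) (fun p hp ↦ hp.2.2.1)
      (fun p hp ↦ measure_ball_four_mul_le (hC p.1) hp.1 (by linarith [hp.2.1]))
      fun p hp ↦ ENNReal.mul_lt_of_lt_div <| by
        rw [ENNReal.div_eq_inv_mul, hν _ measurableSet_ball]; exact hp.2.2.2
  calc γ {x | ENNReal.ofReal lam < locMax γ m α u x}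
      ≤ γ (⋃ n : ℕ, ⋃ p ∈ T n, ball p.1 p.2) := measure_mono (setOf_lt_locMax_subset γ m α u _)
    _ = ⨆ n : ℕ, γ (⋃ p ∈ T n, ball p.1 p.2) :=
        Monotone.measure_iUnion fun _ _ hmn ↦
          Set.biUnion_subset_biUnion_left (admissibleBallsAbove_mono γ m α u _ (Nat.cast_le.2 hmn))
    _ ≤ _ := iSup_le h_bounded

theorem stmt18 {X : Type*} [MetricSpace X] [MeasurableSpace X] [BorelSpace X]
    (N : ℕ)
    (hN : ∀ (x : X) (r : ℝ) (S : Finset X),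
      (∀ y ∈ S, ball y (r / 2) ⊆ ball x r) →
      ((S : Set X).Pairwise fun a b => Disjoint (ball a (r / 2)) (ball b (r / 2))) →
      S.card ≤ N)
    (γ : Measure X)
    (hγ : ∀ (c : X) (r : ℝ), 0 < r → 0 < γ (ball c r) ∧ γ (ball c r) < ⊤)
    (m : X → ℝ) (hm : ∀ x, 0 < m x)
    (hA : ∀ a : ℝ, 0 < a → ∃ C : ℝ, 1 ≤ C ∧ ∀ (c : X) (r : ℝ), 0 < r → r ≤ a * m c →
      γ (ball c (2 * r)) ≤ ENNReal.ofReal C * γ (ball c r))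
    (α : ℝ) (hα : 0 < α) :
    ∃ C : ℝ, 1 ≤ C ∧ ∀ u : X → ℝ, Integrable u γ → ∀ lam : ℝ, 0 < lam →
      γ {x : X | ENNReal.ofReal lam < locMax γ m α u x} ≤
        (ENNReal.ofReal C / ENNReal.ofReal lam) * ∫⁻ z, (‖u z‖₊ : ℝ≥0∞) ∂γ :=
  stmt18_general γ m hA α hα
end

section
/- Let (X,d) be a metric space, γ a Borel measure on X with 0 < γ(B) < ∞ for every ball B, and m : X → (0,∞) an admissibility function satisfying condition (C): for every α > 0 there exists c_α ≥ 1 such that d(x,y) ≤ α·m(x) implies m(x) ≤ c_α·m(y). Let β ≥ 1, set α := 2β·c_{2β}, and suppose A_β ≥ 1 is a constant such that γ(B(z,4t)) ≤ A_β·γ(B(z,t/4)) for all z ∈ X and all t > 0 with t ≤ β·c_β·m(z). Let 0 < λ < 1/A_β. Suppose ρ : [0,∞) → X satisfies d(ρ(s),ρ(u)) = |s−u| for all s,u ≥ 0 (a unit-speed geodesic ray), E ⊆ X is open, 0 < t ≤ β·m(ρ(0)), the sector R := ∪_{0 ≤ s ≤ t} B(ρ(s), s/4) satisfies R ⊆ E,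 and y ∈ R. Then every point of B(y,2t) lies in E*_{α,λ} := {x ∈ X : there is an α-admissible ball B with x ∈ B and γ(B ∩ E)/γ(B) > λ}; in fact B(y,2t) is itself an α-admissible ball with γ(B(y,2t) ∩ E)/γ(B(y,2t)) > λ. -/
/-!
The ball `B(y, 2t)` is squeezed between two balls centred at the far end `ρ(t)` of the sector:
`B(ρ(t), t/4) ⊆ B(y, 2t) ∩ E ⊆ B(y, 2t) ⊆ B(ρ(t), 4t)`. Condition (C) along the ray makes
`m(ρ(t))` comparable to `m(ρ(0))`, so the doubling estimate applies at `ρ(t)` and gives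
`γ(B(y, 2t)) ≤ A_β γ(B(y, 2t) ∩ E)`, i.e. a relative density at least `1/A_β > λ`.
Admissibility of `B(y, 2t)` is (C) applied between `ρ(0)` and `y`.
-/

open MeasureTheory Metric ENNReal

section GeodesicSector

variable {X : Type*} [MetricSpace X] {ρ : ℝ → X}

def geodesicSector (ρ : ℝ → X) (t : ℝ) : Set X :=
  ⋃ s ∈ Set.Icc (0 : ℝ) t, ball (ρ s) (s / 4)

variable (hρ : ∀ s u : ℝ, 0 ≤ s → 0 ≤ u → dist (ρ s) (ρ u) = |s - u|)
include hρ

theorem dist_geodesic_ray_of_le {s u : ℝ} (hs : 0 ≤ s) (hsu : s ≤ u) :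
    dist (ρ s) (ρ u) = u - s := by
  rw [hρ s u hs (hs.trans hsu), abs_of_nonpos (by linarith), neg_sub]

theorem dist_endpoint_lt_of_mem_geodesicSector {t : ℝ} {y : X} (hy : y ∈ geodesicSector ρ t) :
    dist y (ρ t) < t := by
  simp only [geodesicSector, Set.mem_iUnion, Set.mem_Icc, mem_ball] at hy
  obtain ⟨s, ⟨hs0, hst⟩, hys⟩ := hy
  calc dist y (ρ t) ≤ dist y (ρ s) + dist (ρ s) (ρ t) := dist_triangle _ _ _
    _ < s / 4 + (t - s) := by rw [dist_geodesic_ray_of_le hρ hs0 hst]; linarith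
    _ ≤ t := by linarith

theorem dist_origin_lt_of_mem_geodesicSector {t : ℝ} {y : X} (hy : y ∈ geodesicSector ρ t) :
    dist (ρ 0) y < 2 * t := by
  simp only [geodesicSector, Set.mem_iUnion, Set.mem_Icc, mem_ball] at hy
  obtain ⟨s, ⟨hs0, hst⟩, hys⟩ := hy
  calc dist (ρ 0) y ≤ dist (ρ 0) (ρ s) + dist (ρ s) y := dist_triangle _ _ _
    _ < s + s / 4 := by rw [dist_geodesic_ray_of_le hρ le_rfl hs0, dist_comm]; linarith
    _ ≤ 2 * t := by linarith

end GeodesicSector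

theorem ball_endpoint_subset_geodesicSector {X : Type*} [MetricSpace X] (ρ : ℝ → X) {t : ℝ}
    (ht : 0 ≤ t) : ball (ρ t) (t / 4) ⊆ geodesicSector ρ t :=
  Set.subset_biUnion_of_mem (u := fun s => ball (ρ s) (s / 4)) ⟨ht, le_rfl⟩

theorem le_mul_cst_mul_of_dist_le {X : Type*} [MetricSpace X] {m : X → ℝ} {cst : ℝ → ℝ}
    (hC : ∀ a : ℝ, 0 < a → ∀ x y : X, dist x y ≤ a * m x → m x ≤ cst a * m y)
    {a r : ℝ} (ha : 0 < a) {x y : X} (hxy : dist x y ≤ a * m x) (hr : r ≤ a * m x) :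
    r ≤ a * cst a * m y :=
  calc r ≤ a * m x := hr
    _ ≤ a * (cst a * m y) := mul_le_mul_of_nonneg_left (hC a ha x y hxy) ha.le
    _ = a * cst a * m y := (mul_assoc _ _ _).symm

theorem ofReal_mul_measure_lt_of_le_mul {X : Type*} [MeasurableSpace X] {μ : Measure X}
    {B F : Set X} {A lam : ℝ} (hA : 0 ≤ A) (hlamA : lam * A < 1)
    (hBF : μ B ≤ ENNReal.ofReal A * μ F) (hF0 : μ F ≠ 0) (hFtop : μ F ≠ ⊤) :
    ENNReal.ofReal lam * μ B < μ F :=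
  calc ENNReal.ofReal lam * μ B ≤ ENNReal.ofReal lam * (ENNReal.ofReal A * μ F) :=
        mul_le_mul_right hBF _
    _ = ENNReal.ofReal (lam * A) * μ F := by rw [← mul_assoc, ← ENNReal.ofReal_mul' hA]
    _ < 1 * μ F := by
        rw [ENNReal.mul_lt_mul_iff_left hF0 hFtop, ← ENNReal.ofReal_one]
        exact (ENNReal.ofReal_lt_ofReal_iff one_pos).2 hlamA
    _ = μ F := one_mul _

theorem stmt19_general {X : Type*} [MetricSpace X] [MeasurableSpace X]
    (γ : Measure X)
    (hγ : ∀ (c : X) (r : ℝ), 0 < r → 0 < γ (ball c r) ∧ γ (ball c r) < ⊤)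
    (m : X → ℝ)
    (cst : ℝ → ℝ)
    (hC : ∀ a : ℝ, 0 < a → ∀ x y : X, dist x y ≤ a * m x → m x ≤ cst a * m y)
    (β : ℝ) (hβ : 1 ≤ β)
    (Aβ : ℝ) (hAβ1 : 1 ≤ Aβ)
    (hAβ : ∀ (z : X) (t : ℝ), 0 < t → t ≤ β * cst β * m z →
      γ (ball z (4 * t)) ≤ ENNReal.ofReal Aβ * γ (ball z (t / 4)))
    (lam : ℝ) (hlam : lam < 1 / Aβ)
    (ρ : ℝ → X) (hρ : ∀ s u : ℝ, 0 ≤ s → 0 ≤ u → dist (ρ s) (ρ u) = |s - u|)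
    (E : Set X)
    (t : ℝ) (ht : 0 < t) (htβ : t ≤ β * m (ρ 0))
    (hRE : (⋃ s ∈ Set.Icc (0 : ℝ) t, ball (ρ s) (s / 4)) ⊆ E)
    (y : X) (hy : y ∈ ⋃ s ∈ Set.Icc (0 : ℝ) t, ball (ρ s) (s / 4)) :
    ball y (2 * t) ⊆
        {x : X | ∃ (c : X) (r : ℝ), 0 < r ∧ r ≤ (2 * β * cst (2 * β)) * m c ∧
          x ∈ ball c r ∧ ENNReal.ofReal lam * γ (ball c r) < γ (ball c r ∩ E)} ∧
      2 * t ≤ (2 * β * cst (2 * β)) * m y ∧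
      ENNReal.ofReal lam * γ (ball y (2 * t)) < γ (ball y (2 * t) ∩ E) := by
  have hβ0 : 0 < β := one_pos.trans_le hβ
  have hyt := dist_endpoint_lt_of_mem_geodesicSector hρ hy
  have h0y := dist_origin_lt_of_mem_geodesicSector hρ hy
  have hadm : 2 * t ≤ 2 * β * cst (2 * β) * m y :=
    le_mul_cst_mul_of_dist_le hC (by linarith) (by linarith) (by linarith)
  have hdoubling : t ≤ β * cst β * m (ρ t) :=
    le_mul_cst_mul_of_dist_le hC hβ0 (by rw [dist_geodesic_ray_of_le hρ le_rfl ht.le]; linarith)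
      (by linarith)
  have hinner : ball (ρ t) (t / 4) ⊆ ball y (2 * t) ∩ E :=
    Set.subset_inter (ball_subset_ball' (by rw [dist_comm]; linarith))
      ((ball_endpoint_subset_geodesicSector ρ ht.le).trans hRE)
  have hcover : γ (ball y (2 * t)) ≤ ENNReal.ofReal Aβ * γ (ball y (2 * t) ∩ E) :=
    calc γ (ball y (2 * t)) ≤ γ (ball (ρ t) (4 * t)) :=
          measure_mono (ball_subset_ball' (by linarith))
      _ ≤ ENNReal.ofReal Aβ * γ (ball (ρ t) (t / 4)) := hAβ _ t ht hdoubling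
      _ ≤ ENNReal.ofReal Aβ * γ (ball y (2 * t) ∩ E) :=
          mul_le_mul_right (measure_mono hinner) _
  have hAβ0 : 0 < Aβ := one_pos.trans_le hAβ1
  have hdensity : ENNReal.ofReal lam * γ (ball y (2 * t)) < γ (ball y (2 * t) ∩ E) :=
    ofReal_mul_measure_lt_of_le_mul hAβ0.le ((lt_div_iff₀ hAβ0).1 hlam) hcover
      ((hγ (ρ t) (t / 4) (by linarith)).1.trans_le (measure_mono hinner)).ne'
      ((measure_mono Set.inter_subset_left).trans_lt (hγ y (2 * t) (by linarith)).2).ne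
  exact ⟨fun x hx => ⟨y, 2 * t, by linarith, hadm, hx, hdensity⟩, hadm, hdensity⟩

theorem stmt19 {X : Type*} [MetricSpace X] [MeasurableSpace X] [BorelSpace X]
    (γ : Measure X)
    (hγ : ∀ (c : X) (r : ℝ), 0 < r → 0 < γ (ball c r) ∧ γ (ball c r) < ⊤)
    (m : X → ℝ) (hm : ∀ x, 0 < m x)
    (cst : ℝ → ℝ) (hcst1 : ∀ a : ℝ, 0 < a → 1 ≤ cst a)
    (hC : ∀ a : ℝ, 0 < a → ∀ x y : X, dist x y ≤ a * m x → m x ≤ cst a * m y)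
    (β : ℝ) (hβ : 1 ≤ β)
    (Aβ : ℝ) (hAβ1 : 1 ≤ Aβ)
    (hAβ : ∀ (z : X) (t : ℝ), 0 < t → t ≤ β * cst β * m z →
      γ (ball z (4 * t)) ≤ ENNReal.ofReal Aβ * γ (ball z (t / 4)))
    (lam : ℝ) (hlam0 : 0 < lam) (hlam : lam < 1 / Aβ)
    (ρ : ℝ → X) (hρ : ∀ s u : ℝ, 0 ≤ s → 0 ≤ u → dist (ρ s) (ρ u) = |s - u|)
    (E : Set X) (hE : IsOpen E)
    (t : ℝ) (ht : 0 < t) (htβ : t ≤ β * m (ρ 0))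
    (hRE : (⋃ s ∈ Set.Icc (0 : ℝ) t, ball (ρ s) (s / 4)) ⊆ E)
    (y : X) (hy : y ∈ ⋃ s ∈ Set.Icc (0 : ℝ) t, ball (ρ s) (s / 4)) :
    ball y (2 * t) ⊆
        {x : X | ∃ (c : X) (r : ℝ), 0 < r ∧ r ≤ (2 * β * cst (2 * β)) * m c ∧
          x ∈ ball c r ∧ ENNReal.ofReal lam * γ (ball c r) < γ (ball c r ∩ E)} ∧
      2 * t ≤ (2 * β * cst (2 * β)) * m y ∧
      ENNReal.ofReal lam * γ (ball y (2 * t)) < γ (ball y (2 * t) ∩ E) :=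
  stmt19_general γ hγ m cst hC β hβ Aβ hAβ1 hAβ lam hlam ρ hρ E t ht htβ hRE y hy
end
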